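/- Let g, f ∈ ℚ[[x]] with g having nonzero constant term, f having zero constant term and nonzero coefficient of x, and let f̄ ∈ ℚ[[x]] be the compositional inverse of f (so f̄∘f = x and f∘f̄ = x, f̄ having zero constant term). Define F = f̄∘(-f) and G = g·(g∘F)⁻¹ (note g∘F has the same nonzero constant term as g, hence is invertible). Then F∘F = x and G·(G∘F) = 1; that is, the Riordan array (g, f)·(1/g(f̄(-x)), f̄(-x)) = (g/(g∘f̄∘(-f)), f̄∘(-f)) is a Riordan involution. -/

import Mathlib

open PowerSeries Finset

/-- Substitution `f ∘ h` of a power series `h` (intended to have zero constant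
term) into a power series `f`: the coefficient of `xⁿ` is
`∑_{k=0}^{n} f_k · [xⁿ](hᵏ)`. -/
noncomputable def PowerSeries.comp {R : Type*} [CommSemiring R]
    (f h : PowerSeries R) : PowerSeries R :=
  PowerSeries.mk fun n => ∑ k ∈ Finset.range (n + 1),
    (PowerSeries.coeff k f) * (PowerSeries.coeff n (h ^ k))

/-!
Once `comp` is identified with Mathlib's `PowerSeries.subst`, substitution of a series without
constant term is an associative ring homomorphism. Hence
`F ∘ F = f̄ ∘ (-(f ∘ f̄ ∘ (-f))) = f̄ ∘ f = x`, so `∘ F` is an involutive ring endomorphism.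
It sends `g ∘ F` back to `g`, so `g · ((g ∘ F)⁻¹ ∘ F) = 1`, and
`G · (G ∘ F) = (g · ((g ∘ F)⁻¹ ∘ F)) · ((g ∘ F) · (g ∘ F)⁻¹) = 1`.
-/

namespace PowerSeries

section CommSemiring

variable {R : Type*} [CommSemiring R]

theorem coeff_pow_eq_zero_of_lt {h : R⟦X⟧} (h0 : constantCoeff h = 0) {n k : ℕ} (hk : n < k) :
    coeff n (h ^ k) = 0 :=
  X_pow_dvd_iff.mp (pow_dvd_pow_of_dvd (X_dvd_iff.mpr h0) k) n hk

theorem constantCoeff_comp (f h : R⟦X⟧) : constantCoeff (f.comp h) = constantCoeff f := by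
  rw [← coeff_zero_eq_constantCoeff_apply, comp, coeff_mk]
  simp

end CommSemiring

variable {R : Type*} [CommRing R]

theorem comp_eq_subst (f : R⟦X⟧) {h : R⟦X⟧} (h0 : constantCoeff h = 0) :
    f.comp h = f.subst h := by
  ext n
  rw [coeff_subst' (HasSubst.of_constantCoeff_zero' h0), comp, coeff_mk,
    finsum_eq_sum_of_support_subset (s := range (n + 1))]
  · simp only [smul_eq_mul]
  · intro k hk
    contrapose! hk
    simp [coeff_pow_eq_zero_of_lt h0 (by simpa using hk)]

theorem comp_mul (f g : R⟦X⟧) {h : R⟦X⟧} (h0 : constantCoeff h = 0) :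
    (f * g).comp h = f.comp h * g.comp h := by
  simp only [comp_eq_subst _ h0, subst_mul (HasSubst.of_constantCoeff_zero' h0)]

theorem one_comp {h : R⟦X⟧} (h0 : constantCoeff h = 0) : (1 : R⟦X⟧).comp h = 1 := by
  rw [comp_eq_subst _ h0, ← coe_substAlgHom (HasSubst.of_constantCoeff_zero' h0), map_one]

theorem neg_comp (f : R⟦X⟧) {h : R⟦X⟧} (h0 : constantCoeff h = 0) :
    (-f).comp h = -f.comp h := by
  rw [comp_eq_subst _ h0, comp_eq_subst _ h0,
    ← coe_substAlgHom (HasSubst.of_constantCoeff_zero' h0), map_neg]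

theorem comp_X (f : R⟦X⟧) : f.comp X = f := by
  rw [comp_eq_subst _ constantCoeff_X, X_subst]

theorem X_comp {h : R⟦X⟧} (h0 : constantCoeff h = 0) : (X : R⟦X⟧).comp h = h := by
  rw [comp_eq_subst _ h0, subst_X (HasSubst.of_constantCoeff_zero' h0)]

theorem comp_comp (f : R⟦X⟧) {g h : R⟦X⟧} (hg : constantCoeff g = 0)
    (hh : constantCoeff h = 0) : (f.comp g).comp h = f.comp (g.comp h) := by
  have hgh : constantCoeff (g.comp h) = 0 := by rwa [constantCoeff_comp]
  rw [comp_eq_subst f hgh, comp_eq_subst _ hg, comp_eq_subst _ hh, comp_eq_subst g hh,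
    subst_comp_subst_apply (HasSubst.of_constantCoeff_zero' hg)
      (HasSubst.of_constantCoeff_zero' hh)]

theorem comp_neg_comp_self_eq_X {f fbar : R⟦X⟧} (hf0 : constantCoeff f = 0)
    (hfbar0 : constantCoeff fbar = 0) (hfbar_f : fbar.comp f = X) (hf_fbar : f.comp fbar = X) :
    (fbar.comp (-f)).comp (fbar.comp (-f)) = X := by
  set F := fbar.comp (-f)
  have hnf0 : constantCoeff (-f) = 0 := by simp [hf0]
  have hF0 : constantCoeff F = 0 := by rwa [constantCoeff_comp]
  have hfF : f.comp F = -f := by rw [← comp_comp f hfbar0 hnf0, hf_fbar, X_comp hnf0]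
  rw [comp_comp fbar hnf0 hF0, neg_comp f hF0, hfF, neg_neg, hfbar_f]

theorem mul_comp_eq_one_of_comp_self_eq_X {K : Type*} [Field K] {g F : K⟦X⟧}
    (hg0 : constantCoeff g ≠ 0) (hF0 : constantCoeff F = 0) (hFF : F.comp F = X) :
    g * (g.comp F)⁻¹ * (g * (g.comp F)⁻¹).comp F = 1 := by
  set A := g.comp F
  have hA : A * A⁻¹ = 1 := PowerSeries.mul_inv_cancel _ (by rwa [constantCoeff_comp])
  have hAF : A.comp F = g := by rw [comp_comp g hF0 hF0, hFF, comp_X]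
  have hgA : g * A⁻¹.comp F = 1 := by
    rw [← hAF, ← comp_mul _ _ hF0, hA, one_comp hF0]
  calc g * A⁻¹ * (g * A⁻¹).comp F = (g * A⁻¹.comp F) * (A * A⁻¹) := by
        rw [comp_mul _ _ hF0]; ring
    _ = 1 := by rw [hgA, hA, one_mul]

end PowerSeries

theorem stmt16_general (g f fbar : PowerSeries ℚ)
    (hg0 : PowerSeries.constantCoeff g ≠ 0)
    (hf0 : PowerSeries.constantCoeff f = 0)
    (hfbar0 : PowerSeries.constantCoeff fbar = 0)
    (hfbar1 : PowerSeries.comp fbar f = PowerSeries.X)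
    (hfbar2 : PowerSeries.comp f fbar = PowerSeries.X)
    (F G : PowerSeries ℚ)
    (hF : F = PowerSeries.comp fbar (-f))
    (hG : G = g * (PowerSeries.comp g F)⁻¹) :
    PowerSeries.comp F F = PowerSeries.X ∧ G * PowerSeries.comp G F = 1 := by
  have hFF : F.comp F = X := hF ▸ comp_neg_comp_self_eq_X hf0 hfbar0 hfbar1 hfbar2
  have hF0 : constantCoeff F = 0 := by rwa [hF, constantCoeff_comp]
  exact ⟨hFF, hG ▸ mul_comp_eq_one_of_comp_self_eq_X hg0 hF0 hFF⟩

/-- For any Riordan array `(g, f)` with compositional inverse `f̄` of `f`, the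
product array `(g/(g∘f̄∘(-f)), f̄∘(-f))` is a Riordan involution. -/
theorem stmt16 (g f fbar : PowerSeries ℚ)
    (hg0 : PowerSeries.constantCoeff g ≠ 0)
    (hf0 : PowerSeries.constantCoeff f = 0)
    (hf1 : PowerSeries.coeff 1 f ≠ 0)
    (hfbar0 : PowerSeries.constantCoeff fbar = 0)
    (hfbar1 : PowerSeries.comp fbar f = PowerSeries.X)
    (hfbar2 : PowerSeries.comp f fbar = PowerSeries.X)
    (F G : PowerSeries ℚ)
    (hF : F = PowerSeries.comp fbar (-f))
    (hG : G = g * (PowerSeries.comp g F)⁻¹) :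
    PowerSeries.comp F F = PowerSeries.X ∧ G * PowerSeries.comp G F = 1 :=
  stmt16_general g f fbar hg0 hf0 hfbar0 hfbar1 hfbar2 F G hF hG
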